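/- arXiv:2106.06220 — 4 statements merged into one kernel-verified Lean document; each statement's English description precedes it below -/
import Mathlib

section
/- Consider a K-player game (K > 1) in which player k's action set is a nonempty compact interval 𝒰_k = [U_k^min, U_k^max] ⊂ ℝ and player k's cost J_k is twice continuously differentiable on an open set containing 𝒰 := 𝒰_1 × … × 𝒰_K. Suppose that for every k and every u ∈ 𝒰, ∂²J_k/∂u_k²(u) > Σ_{ℓ≠k} |∂²J_k/∂u_k∂u_ℓ(u)|. Then the game has exactly one pure Nash equilibrium. -/
/-!
Since `∂²J_k/∂u_k² > 0`, each `J k` is convex in its own coordinate, so `u` is a Nash equilibrium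
iff `∂J_k/∂u_k (u) · (v - u_k) ≥ 0` for all `k` and `v ∈ 𝒰_k`, i.e. iff `u` is a fixed point of the
projected pseudo-gradient step `u ↦ proj_𝒰 (u - λ (∂J_k/∂u_k (u))_k)`. The Jacobian of the
unprojected step is `I - λ A(u)` with `A(u)_{kl} = ∂²J_k/∂u_k∂u_l (u)`. By strict diagonal
dominance and compactness of `𝒰`, for small `λ > 0` all its rows have `ℓ¹`-norm at most some
`c < 1` on `𝒰`, so the step is a sup-norm contraction of `𝒰`, and Banach's fixed point theorem
gives existence and uniqueness.
-/

noncomputable def pd {K : ℕ} (k : Fin K) (f : (Fin K → ℝ) → ℝ)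
    (u : Fin K → ℝ) : ℝ :=
  deriv (fun v => f (Function.update u k v)) (u k)

open Set Function Filter Topology NNReal

section PartialDerivative

variable {K : ℕ} {f : (Fin K → ℝ) → ℝ} {u : Fin K → ℝ} {k : Fin K}

theorem pd_update_self (k : Fin K) (f : (Fin K → ℝ) → ℝ) (u : Fin K → ℝ) (v : ℝ) :
    pd k f (update u k v) = deriv (fun w => f (update u k w)) v := by
  simp [pd]

theorem hasDerivAt_comp_update {v : ℝ} (hf : DifferentiableAt ℝ f (update u k v)) :
    HasDerivAt (fun w => f (update u k w)) (pd k f (update u k v)) v := by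
  rw [pd_update_self]
  exact (hf.comp v (hasDerivAt_update u k v).differentiableAt).hasDerivAt

theorem pd_eq_fderiv (hf : DifferentiableAt ℝ f u) :
    pd k f u = fderiv ℝ f u (Pi.single k 1) :=
  (hf.hasFDerivAt.comp_hasDerivAt_of_eq (u k) (hasDerivAt_update u k (u k))
    (update_eq_self k u).symm).deriv

theorem contDiffOn_pd {n : WithTop ℕ∞} {O : Set (Fin K → ℝ)} (hO : IsOpen O)
    (hf : ContDiffOn ℝ (n + 1) f O) (k : Fin K) : ContDiffOn ℝ n (pd k f) O := by
  refine ((ContinuousLinearMap.apply ℝ ℝ (Pi.single k 1)).contDiff.comp_contDiffOn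
    (hf.fderiv_of_isOpen hO le_rfl)).congr fun u hu => ?_
  exact pd_eq_fderiv ((hf.differentiableOn (by simp)).differentiableAt (hO.mem_nhds hu))

end PartialDerivative

theorem ContinuousLinearMap.norm_le_sum_abs_apply_single {ι : Type*} [Fintype ι]
    [DecidableEq ι] (L : (ι → ℝ) →L[ℝ] ℝ) : ‖L‖ ≤ ∑ i, |L (Pi.single i 1)| := by
  refine L.opNorm_le_bound (by positivity) fun w => ?_
  have hL : L w = ∑ i, w i * L (Pi.single i 1) := by
    conv_lhs => rw [← Finset.univ_sum_single w]
    simp only [map_sum]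
    refine Finset.sum_congr rfl fun i _ => ?_
    rw [← smul_eq_mul, ← map_smul, ← Pi.single_smul', smul_eq_mul, mul_one]
  calc ‖L w‖ ≤ ∑ i, |w i| * |L (Pi.single i 1)| := by
        rw [hL, Real.norm_eq_abs]
        exact (Finset.abs_sum_le_sum_abs _ _).trans_eq (by simp only [abs_mul])
    _ ≤ ∑ i, ‖w‖ * |L (Pi.single i 1)| := by
        gcongr with i
        exact norm_le_pi_norm w i
    _ = (∑ i, |L (Pi.single i 1)|) * ‖w‖ := by rw [← Finset.mul_sum, mul_comm]

theorem isMinOn_Icc_iff_of_monotoneOn_deriv {φ : ℝ → ℝ} {a b x : ℝ}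
    (hφ : ∀ v ∈ Icc a b, DifferentiableAt ℝ φ v) (hmono : MonotoneOn (deriv φ) (Icc a b))
    (hx : x ∈ Icc a b) :
    IsMinOn φ (Icc a b) x ↔ ∀ v ∈ Icc a b, 0 ≤ deriv φ x * (v - x) := by
  constructor
  · intro hmin v hv
    have h := hmin.localize.hasFDerivWithinAt_nonneg
      (hφ x hx).hasDerivAt.hasFDerivAt.hasFDerivWithinAt
      (sub_mem_posTangentConeAt_of_segment_subset ((convex_Icc a b).segment_subset hx hv))
    simpa [mul_comm] using h
  · intro hvi v hv
    have hsub : ∀ {y z}, y ∈ Icc a b → z ∈ Icc a b → Icc y z ⊆ Icc a b :=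
      fun hy hz => Icc_subset_Icc hy.1 hz.2
    have hcont : ∀ {y z}, y ∈ Icc a b → z ∈ Icc a b → ContinuousOn φ (Icc y z) :=
      fun hy hz w hw => (hφ w (hsub hy hz hw)).continuousAt.continuousWithinAt
    have hdiff : ∀ {y z}, y ∈ Icc a b → z ∈ Icc a b →
        DifferentiableOn ℝ φ (interior (Icc y z)) :=
      fun hy hz w hw => (hφ w (hsub hy hz (interior_subset hw))).differentiableWithinAt
    show φ x ≤ φ v
    rcases le_total x v with hxv | hvx
    · have := (convex_Icc x v).mul_sub_le_image_sub_of_le_deriv (hcont hx hv) (hdiff hx hv)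
        (fun y hy => hmono hx (hsub hx hv (interior_subset hy)) (interior_subset hy).1)
        x (left_mem_Icc.2 hxv) v (right_mem_Icc.2 hxv) hxv
      linarith [hvi v hv]
    · have := (convex_Icc v x).image_sub_le_mul_sub_of_deriv_le (hcont hv hx) (hdiff hv hx)
        (fun y hy => hmono (hsub hv hx (interior_subset hy)) hx (interior_subset hy).2)
        v (left_mem_Icc.2 hvx) x (right_mem_Icc.2 hvx) hvx
      linarith [hvi v hv]

theorem coe_projIcc_eq_iff {a b y x : ℝ} (h : a ≤ b) (hx : x ∈ Icc a b) :
    (projIcc a b h y : ℝ) = x ↔ ∀ v ∈ Icc a b, 0 ≤ (x - y) * (v - x) := by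
  rw [coe_projIcc]
  constructor
  · rintro rfl v ⟨hav, hvb⟩
    rcases le_total y a with hya | hay
    · rw [min_eq_right (hya.trans h), max_eq_left hya]; nlinarith
    rcases le_total y b with hyb | hby
    · rw [min_eq_right hyb, max_eq_right hay]; simp
    · rw [min_eq_left hby, max_eq_right h]; nlinarith
  · intro hvi
    rcases lt_trichotomy y x with hyx | rfl | hxy
    · obtain rfl : x = a := le_antisymm (by nlinarith [hvi a (left_mem_Icc.2 h)]) hx.1
      rw [min_eq_right (hyx.le.trans h), max_eq_left hyx.le]
    · rw [min_eq_right hx.2, max_eq_right hx.1]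
    · obtain rfl : x = b := le_antisymm hx.2 (by nlinarith [hvi b (right_mem_Icc.2 h)])
      rw [min_eq_left hxy.le, max_eq_right h]

theorem existsUnique_isFixedPt_of_lipschitzOnWith {X : Type*} [MetricSpace X] {s : Set X}
    {f : X → X} {c : ℝ≥0} (hs : IsComplete s) (hne : s.Nonempty) (hmaps : MapsTo f s s)
    (hf : LipschitzOnWith c f s) (hc : c < 1) : ∃! x, x ∈ s ∧ IsFixedPt f x := by
  obtain ⟨x₀, hx₀⟩ := hne
  obtain ⟨x, hxs, hfx, -⟩ := ContractingWith.exists_fixedPoint' hs hmaps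
    ⟨hc, hf.mapsToRestrict hmaps⟩ hx₀ (edist_ne_top _ _)
  refine ⟨x, ⟨hxs, hfx⟩, fun y ⟨hys, hfy⟩ => ?_⟩
  have hle := hf.dist_le_mul y hys x hxs
  rw [hfx.eq, hfy.eq] at hle
  have hc' : (c : ℝ) < 1 := hc
  exact dist_le_zero.1 (by nlinarith [dist_nonneg (x := y) (y := x)])

section Compact

variable {X ι : Type*} [TopologicalSpace X] {S : Set X}

theorem IsCompact.exists_pos_forall_le_of_finite [Finite ι] {f : ι → X → ℝ}
    (hS : IsCompact S) (hf : ∀ i, ContinuousOn (f i) S) (hpos : ∀ i, ∀ x ∈ S, 0 < f i x) :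
    ∃ ε > 0, ∀ i, ∀ x ∈ S, ε ≤ f i x := by
  have h : ∀ᶠ ε in 𝓝[>] (0 : ℝ), ∀ i, ∀ x ∈ S, ε ≤ f i x := by
    refine eventually_all.2 fun i => ?_
    obtain ⟨ε, hε, hle⟩ := hS.exists_forall_le' (hf i) (hpos i)
    filter_upwards [Ioc_mem_nhdsGT hε] with δ hδ x hx using hδ.2.trans (hle x hx)
  obtain ⟨ε, hle, hε⟩ := (h.and self_mem_nhdsWithin).exists
  exact ⟨ε, hε, hle⟩

theorem IsCompact.exists_upperBound_of_finite [Finite ι] {f : ι → X → ℝ} (hS : IsCompact S)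
    (hf : ∀ i, ContinuousOn (f i) S) : ∃ B, ∀ i, ∀ x ∈ S, f i x ≤ B := by
  have h : ∀ᶠ B in atTop, ∀ i, ∀ x ∈ S, f i x ≤ B := by
    refine eventually_all.2 fun i => ?_
    obtain ⟨B, hB⟩ := hS.bddAbove_image (hf i)
    filter_upwards [eventually_ge_atTop B] with C hC x hx
      using (hB (mem_image_of_mem _ hx)).trans hC
  exact h.exists

theorem IsCompact.exists_contraction_of_diagDominant [Fintype ι] [DecidableEq ι]
    {a : ι → ι → X → ℝ} (hS : IsCompact S) (ha : ∀ k l, ContinuousOn (a k l) S)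
    (hdom : ∀ k, ∀ x ∈ S, ∑ l ∈ Finset.univ.erase k, |a k l x| < a k k x) :
    ∃ lam > 0, ∃ c : ℝ≥0, c < 1 ∧ ∀ k, ∀ x ∈ S,
      |1 - lam * a k k x| + lam * ∑ l ∈ Finset.univ.erase k, |a k l x| ≤ c := by
  obtain ⟨ε, hε, hεle⟩ := hS.exists_pos_forall_le_of_finite
    (f := fun k x => a k k x - ∑ l ∈ Finset.univ.erase k, |a k l x|)
    (fun k => (ha k k).sub (continuousOn_finsetSum _ fun l _ => (ha k l).abs))
    (fun k x hx => sub_pos.2 (hdom k x hx))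
  obtain ⟨B, hB⟩ := hS.exists_upperBound_of_finite (fun k => ha k k)
  -- `lam = 1 / B'` keeps `1 - lam * a k k` nonnegative; the row sums are then `≤ 1 - ε / B'`.
  set B' := max B ε
  have hB' : 0 < B' := hε.trans_le (le_max_right B ε)
  have hεB' : ε / B' ≤ 1 := (div_le_one hB').2 (le_max_right B ε)
  refine ⟨B'⁻¹, inv_pos.2 hB', (1 - ε / B').toNNReal, ?_, fun k x hx => ?_⟩
  · exact Real.toNNReal_lt_one.2 (sub_lt_self 1 (div_pos hε hB'))
  · have hsum : 0 ≤ ∑ l ∈ Finset.univ.erase k, |a k l x| := by positivity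
    have hεx := hεle k x hx
    have hax : a k k x ≤ B' := (hB k x hx).trans (le_max_left B ε)
    rw [Real.coe_toNNReal _ (sub_nonneg.2 hεB'), abs_of_nonneg
      (by rw [sub_nonneg, inv_mul_le_iff₀ hB']; linarith), div_eq_inv_mul]
    nlinarith [inv_pos.2 hB']

end Compact

section Game

variable {K : ℕ}

theorem Convex.abs_coord_sub_mul_sub_le {S : Set (Fin K → ℝ)} (hS : Convex ℝ S)
    {G : (Fin K → ℝ) → ℝ} {k : Fin K} {lam c : ℝ} (hlam : 0 ≤ lam)
    (hG : ∀ u ∈ S, DifferentiableAt ℝ G u)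
    (hrow : ∀ u ∈ S,
      |1 - lam * pd k G u| + lam * ∑ l ∈ Finset.univ.erase k, |pd l G u| ≤ c)
    {u v : Fin K → ℝ} (hu : u ∈ S) (hv : v ∈ S) :
    |(u k - lam * G u) - (v k - lam * G v)| ≤ c * dist u v := by
  set F : (Fin K → ℝ) → ℝ := fun w => w k - lam * G w
  have hF : ∀ w ∈ S, HasFDerivAt F (ContinuousLinearMap.proj k - lam • fderiv ℝ G w) w :=
    fun w hw => (ContinuousLinearMap.proj k).hasFDerivAt.sub
      ((hG w hw).hasFDerivAt.const_smul lam)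
  have hbound : ∀ w ∈ S, ‖fderiv ℝ F w‖ ≤ c := by
    intro w hw
    rw [(hF w hw).fderiv]
    refine (ContinuousLinearMap.norm_le_sum_abs_apply_single _).trans
      (le_trans (le_of_eq ?_) (hrow w hw))
    rw [← Finset.add_sum_erase _ _ (Finset.mem_univ k), Finset.mul_sum]
    congr 1
    · simp [pd_eq_fderiv (hG w hw)]
    · refine Finset.sum_congr rfl fun l hl => ?_
      simp [pd_eq_fderiv (hG w hw), Pi.single_eq_of_ne (Finset.ne_of_mem_erase hl).symm,
        abs_mul, abs_of_nonneg hlam]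
  have := hS.norm_image_sub_le_of_norm_fderiv_le (fun w hw => (hF w hw).differentiableAt)
    hbound hv hu
  rwa [Real.norm_eq_abs, ← dist_eq_norm] at this

theorem forall_le_update_iff {f : (Fin K → ℝ) → ℝ} {u : Fin K → ℝ} {k : Fin K}
    {a b : ℝ} (hu : u k ∈ Icc a b) (hf : ∀ v ∈ Icc a b, DifferentiableAt ℝ f (update u k v))
    (hf' : ∀ v ∈ Icc a b, DifferentiableAt ℝ (pd k f) (update u k v))
    (hconv : ∀ v ∈ Icc a b, 0 ≤ pd k (pd k f) (update u k v)) :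
    (∀ v ∈ Icc a b, f u ≤ f (update u k v)) ↔
      ∀ v ∈ Icc a b, 0 ≤ pd k f u * (v - u k) := by
  have hderiv : deriv (fun w => f (update u k w)) = fun w => pd k f (update u k w) :=
    funext fun w => (pd_update_self k f u w).symm
  have hψ : ∀ w ∈ Icc a b, HasDerivAt (fun w => pd k f (update u k w))
      (pd k (pd k f) (update u k w)) w :=
    fun w hw => hasDerivAt_comp_update (hf' w hw)
  have hmono : MonotoneOn (fun w => pd k f (update u k w)) (Icc a b) := by
    refine monotoneOn_of_deriv_nonneg (convex_Icc a b)
      (fun w hw => (hψ w hw).continuousAt.continuousWithinAt)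
      (fun w hw => (hψ w (interior_subset hw)).differentiableAt.differentiableWithinAt)
      fun w hw => ?_
    rw [(hψ w (interior_subset hw)).deriv]
    exact hconv w (interior_subset hw)
  have h := isMinOn_Icc_iff_of_monotoneOn_deriv (φ := fun w => f (update u k w))
    (fun v hv => (hasDerivAt_comp_update (hf v hv)).differentiableAt) (hderiv ▸ hmono) hu
  simpa only [isMinOn_iff, hderiv, update_eq_self] using h

variable (Umin Umax : Fin K → ℝ) (hU : ∀ k, Umin k ≤ Umax k)
  (J : Fin K → (Fin K → ℝ) → ℝ)

noncomputable def projGradStep (lam : ℝ) (u : Fin K → ℝ) : Fin K → ℝ :=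
  fun k => projIcc (Umin k) (Umax k) (hU k) (u k - lam * pd k (J k) u)

theorem projGradStep_mem (lam : ℝ) (u : Fin K → ℝ) :
    projGradStep Umin Umax hU J lam u ∈ univ.pi fun k => Icc (Umin k) (Umax k) :=
  fun _ _ => Subtype.prop _

variable {Umin Umax J}

theorem projGradStep_eq_self_iff {lam : ℝ} (hlam : 0 < lam) {u : Fin K → ℝ}
    (hu : u ∈ univ.pi fun k => Icc (Umin k) (Umax k)) :
    projGradStep Umin Umax hU J lam u = u ↔
      ∀ k, ∀ v ∈ Icc (Umin k) (Umax k), 0 ≤ pd k (J k) u * (v - u k) := by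
  refine funext_iff.trans (forall_congr' fun k => ?_)
  rw [projGradStep, coe_projIcc_eq_iff (hU k) (hu k trivial)]
  refine forall₂_congr fun v _ => ?_
  rw [sub_sub_cancel, mul_assoc, mul_nonneg_iff_of_pos_left hlam]

theorem projGradStep_eq_self_iff_forall_le_update {lam : ℝ} (hlam : 0 < lam)
    (hJ : ∀ k, ∀ u ∈ univ.pi fun k => Icc (Umin k) (Umax k), DifferentiableAt ℝ (J k) u)
    (hJ' : ∀ k, ∀ u ∈ univ.pi fun k => Icc (Umin k) (Umax k),
      DifferentiableAt ℝ (pd k (J k)) u)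
    (hconv : ∀ k, ∀ u ∈ univ.pi fun k => Icc (Umin k) (Umax k), 0 ≤ pd k (pd k (J k)) u)
    {u : Fin K → ℝ} (hu : u ∈ univ.pi fun k => Icc (Umin k) (Umax k)) :
    projGradStep Umin Umax hU J lam u = u ↔
      ∀ k, ∀ v ∈ Icc (Umin k) (Umax k), J k u ≤ J k (update u k v) := by
  refine (projGradStep_eq_self_iff hU hlam hu).trans (forall_congr' fun k => ?_)
  have hupd : ∀ v ∈ Icc (Umin k) (Umax k),
      update u k v ∈ univ.pi fun k => Icc (Umin k) (Umax k) :=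
    fun v hv => (update_mem_pi_iff_of_mem hu).2 fun _ => hv
  exact (forall_le_update_iff (hu k trivial) (fun v hv => hJ k _ (hupd v hv))
    (fun v hv => hJ' k _ (hupd v hv)) (fun v hv => hconv k _ (hupd v hv))).symm

theorem lipschitzOnWith_projGradStep {S : Set (Fin K → ℝ)} (hS : Convex ℝ S) {lam : ℝ}
    (hlam : 0 ≤ lam) {c : ℝ≥0} (hJ : ∀ k, ∀ u ∈ S, DifferentiableAt ℝ (pd k (J k)) u)
    (hrow : ∀ k, ∀ u ∈ S, |1 - lam * pd k (pd k (J k)) u|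
      + lam * ∑ l ∈ Finset.univ.erase k, |pd l (pd k (J k)) u| ≤ c) :
    LipschitzOnWith c (projGradStep Umin Umax hU J lam) S := by
  refine LipschitzOnWith.of_dist_le_mul fun u hu v hv =>
    (dist_pi_le_iff (by positivity)).2 fun k => ?_
  rw [Real.dist_eq]
  exact (abs_projIcc_sub_projIcc (hU k)).trans
    (hS.abs_coord_sub_mul_sub_le hlam (hJ k) (hrow k) hu hv)

end Game

theorem existsUnique_pure_nash_of_diag_dominance_general
    (K : ℕ)
    (Umin Umax : Fin K → ℝ) (hU : ∀ k, Umin k ≤ Umax k)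
    (J : Fin K → (Fin K → ℝ) → ℝ)
    (O : Set (Fin K → ℝ)) (hO : IsOpen O)
    (hUO : (Set.univ.pi fun k => Set.Icc (Umin k) (Umax k)) ⊆ O)
    (hsmooth : ∀ k, ContDiffOn ℝ 2 (J k) O)
    (hdom : ∀ k, ∀ u ∈ Set.univ.pi fun k => Set.Icc (Umin k) (Umax k),
      ∑ l ∈ Finset.univ.erase k, |pd l (pd k (J k)) u| < pd k (pd k (J k)) u) :
    ∃! ustar : Fin K → ℝ,
      ustar ∈ (Set.univ.pi fun k => Set.Icc (Umin k) (Umax k)) ∧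
      ∀ k, ∀ v ∈ Set.Icc (Umin k) (Umax k),
        J k ustar ≤ J k (Function.update ustar k v) := by
  set S := Set.univ.pi fun k => Set.Icc (Umin k) (Umax k)
  have hSne : S.Nonempty := ⟨Umin, fun k _ => left_mem_Icc.2 (hU k)⟩
  have hJ1 : ∀ k, ContDiffOn ℝ 1 (pd k (J k)) O := fun k => contDiffOn_pd hO (hsmooth k) k
  have hJ : ∀ k, ∀ u ∈ S, DifferentiableAt ℝ (J k) u := fun k u hu =>
    ((hsmooth k).differentiableOn (by simp)).differentiableAt (hO.mem_nhds (hUO hu))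
  have hJ' : ∀ k, ∀ u ∈ S, DifferentiableAt ℝ (pd k (J k)) u := fun k u hu =>
    ((hJ1 k).differentiableOn (by simp)).differentiableAt (hO.mem_nhds (hUO hu))
  have hJ'' : ∀ k l, ContinuousOn (pd l (pd k (J k))) S := fun k l =>
    (contDiffOn_pd (n := 0) hO (by simpa using hJ1 k) l).continuousOn.mono hUO
  have hconv : ∀ k, ∀ u ∈ S, 0 ≤ pd k (pd k (J k)) u := fun k u hu =>
    (Finset.sum_nonneg fun _ _ => abs_nonneg _).trans (hdom k u hu).le
  obtain ⟨lam, hlam, c, hc, hrow⟩ :=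
    (isCompact_univ_pi fun k => isCompact_Icc).exists_contraction_of_diagDominant hJ'' hdom
  have hnash := fun u (hu : u ∈ S) =>
    projGradStep_eq_self_iff_forall_le_update hU hlam hJ hJ' hconv hu
  obtain ⟨u, ⟨huS, hfix⟩, huniq⟩ := existsUnique_isFixedPt_of_lipschitzOnWith
    (isClosed_set_pi fun k _ => isClosed_Icc).isComplete hSne
    (fun u _ => projGradStep_mem Umin Umax hU J lam u)
    (lipschitzOnWith_projGradStep hU (convex_pi fun k _ => convex_Icc _ _) hlam.le hJ' hrow) hc
  exact ⟨u, ⟨huS, (hnash u huS).1 hfix⟩,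
    fun v ⟨hvS, hv⟩ => huniq v ⟨hvS, (hnash v hvS).2 hv⟩⟩

/-- Diagonal strict dominance of the second derivatives implies existence and
uniqueness of the pure Nash equilibrium: if each cost `J k` is twice continuously
differentiable on an open set containing the product of the compact action
intervals and `∂²J_k/∂u_k² (u) > Σ_{ℓ≠k} |∂²J_k/∂u_k∂u_ℓ (u)|` on that product,
then the game has exactly one pure Nash equilibrium. -/
theorem existsUnique_pure_nash_of_diag_dominance
    (K : ℕ) (hK : 1 < K)
    (Umin Umax : Fin K → ℝ) (hU : ∀ k, Umin k ≤ Umax k)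
    (J : Fin K → (Fin K → ℝ) → ℝ)
    (O : Set (Fin K → ℝ)) (hO : IsOpen O)
    (hUO : (Set.univ.pi fun k => Set.Icc (Umin k) (Umax k)) ⊆ O)
    (hsmooth : ∀ k, ContDiffOn ℝ 2 (J k) O)
    (hdom : ∀ k, ∀ u ∈ Set.univ.pi fun k => Set.Icc (Umin k) (Umax k),
      ∑ l ∈ Finset.univ.erase k, |pd l (pd k (J k)) u| < pd k (pd k (J k)) u) :
    ∃! ustar : Fin K → ℝ,
      ustar ∈ (Set.univ.pi fun k => Set.Icc (Umin k) (Umax k)) ∧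
      ∀ k, ∀ v ∈ Set.Icc (Umin k) (Umax k),
        J k ustar ≤ J k (Function.update ustar k v) :=
  existsUnique_pure_nash_of_diag_dominance_general K Umin Umax hU J O hO hUO hsmooth hdom
end

section
/- Consider a K-player game (K > 1) in which player k's action set is a nonempty compact interval 𝒰_k = [U_k^min, U_k^max] ⊂ ℝ and player k's cost J_k is twice continuously differentiable on an open set containing 𝒰 := 𝒰_1 × … × 𝒰_K, and suppose that for every k and every u ∈ 𝒰, ∂²J_k/∂u_k²(u) > Σ_{ℓ≠k} |∂²J_k/∂u_k∂u_ℓ(u)|. Then the simultaneous best-response map BR : 𝒰 → 𝒰, whose k-th component BR_k(u) is the unique minimizer of v ↦ J_k(v, u_{-k}) on 𝒰_k, is well defined and is a contraction with respect to the sup norm: there exists c ∈ [0,1) such that max_k |BR_k(u) − BR_k(v)| ≤ c · max_k |u_k − v_k| for all u, v ∈ 𝒰. -/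
/-!
Along its own coordinate, player `k`'s cost has second derivative `∂²J_k/∂u_k²`, which is
positive by diagonal dominance; so the cost is strictly convex there and the best response is
unique. For the contraction, let `a = BR_k u`, `b = BR_k v`, and let `x`, `y` be `u`, `v` with
`k`-th coordinate replaced by `a`, `b`. The first-order conditions at the two minimizers give
`(∂_k J_k(y) - ∂_k J_k(x)) (b - a) ≤ 0`, and the mean value theorem on `[x, y]` writes this
difference as `∑_l (y_l - x_l) H_lk(z)` with `H` the Hessian of `J_k`. Isolating the `l = k`
term, diagonal dominance yields `|b - a| ≤ ρ_k(z) max_l |u_l - v_l|` with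
`ρ_k = ∑_{l ≠ k} |H_lk| / H_kk`. Each `ρ_k` is continuous and `< 1` on the compact box of
actions, hence bounded there by a common `c < 1`.
-/

open Function Set Filter Topology

theorem HasFDerivAt.apply_const {E F : Type*} [NormedAddCommGroup E] [NormedSpace ℝ E]
    [NormedAddCommGroup F] [NormedSpace ℝ F] {c : E → F →L[ℝ] ℝ} {c' : E →L[ℝ] F →L[ℝ] ℝ}
    {x : E} (hc : HasFDerivAt c c' x) (e : F) :
    HasFDerivAt (fun z => c z e) ((ContinuousLinearMap.apply ℝ ℝ e).comp c') x :=
  (ContinuousLinearMap.apply ℝ ℝ e).hasFDerivAt.comp x hc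

theorem ContinuousLinearMap.apply_eq_sum_mul_single {ι : Type*} [Fintype ι] [DecidableEq ι]
    (φ : (ι → ℝ) →L[ℝ] ℝ) (h : ι → ℝ) : φ h = ∑ l, h l * φ (Pi.single l 1) :=
  calc φ h = φ (∑ l, h l • Pi.single l 1) := by
        congr 1; ext i; simp [Pi.single_apply]
    _ = ∑ l, h l * φ (Pi.single l 1) := by simp only [map_sum, map_smul, smul_eq_mul]

theorem IsMinOn.deriv_mul_sub_nonneg {g : ℝ → ℝ} {s : Set ℝ} (hs : Convex ℝ s) {a b d : ℝ}
    (hmin : IsMinOn g s a) (hd : HasDerivAt g d a) (ha : a ∈ s) (hb : b ∈ s) :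
    0 ≤ d * (b - a) := by
  simpa [mul_comm] using hmin.localize.hasFDerivWithinAt_nonneg
    hd.hasDerivWithinAt.hasFDerivWithinAt
    (sub_mem_posTangentConeAt_of_segment_subset (hs.segment_subset ha hb))

theorem abs_sum_mul_le_mul_sum_abs {ι : Type*} (s : Finset ι) {d T : ι → ℝ} {N : ℝ}
    (hd : ∀ i ∈ s, |d i| ≤ N) : |∑ i ∈ s, d i * T i| ≤ N * ∑ i ∈ s, |T i| :=
  calc |∑ i ∈ s, d i * T i| ≤ ∑ i ∈ s, |d i * T i| := Finset.abs_sum_le_sum_abs _ _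
    _ ≤ ∑ i ∈ s, N * |T i| := Finset.sum_le_sum fun i hi => by
        rw [abs_mul]; exact mul_le_mul_of_nonneg_right (hd i hi) (abs_nonneg _)
    _ = N * ∑ i ∈ s, |T i| := (Finset.mul_sum _ _ _).symm

theorem abs_le_of_add_mul_mul_nonpos {x S T M : ℝ} (hT : 0 < T) (hS : |S| ≤ T * M)
    (h : (S + x * T) * x ≤ 0) : |x| ≤ M := by
  have hM : 0 ≤ M := nonneg_of_mul_nonneg_right ((abs_nonneg S).trans hS) hT
  have hquad : T * |x| ^ 2 ≤ T * M * |x| :=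
    calc T * |x| ^ 2 = x * T * x := by rw [sq_abs]; ring
      _ ≤ -S * x := by linarith
      _ ≤ |S| * |x| := by rw [← abs_mul]; exact neg_mul S x ▸ neg_le_abs _
      _ ≤ T * M * |x| := mul_le_mul_of_nonneg_right hS (abs_nonneg x)
  by_contra! hxM
  have := mul_pos (mul_pos hT (hM.trans_lt hxM)) (sub_pos.2 hxM)
  nlinarith

theorem IsCompact.eventually_le_mul_of_lt {X : Type*} [TopologicalSpace X] {s : Set X}
    (hs : IsCompact s) {f g : X → ℝ} (hf : ContinuousOn f s) (hg : ContinuousOn g s)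
    (hg0 : ∀ x ∈ s, 0 < g x) (hfg : ∀ x ∈ s, f x < g x) :
    ∀ᶠ c in 𝓝[<] 1, ∀ x ∈ s, f x ≤ c * g x := by
  rcases s.eq_empty_or_nonempty with rfl | hne
  · simp
  obtain ⟨x₀, hx₀, hmax⟩ := hs.exists_isMaxOn hne (hf.div hg fun x hx => (hg0 x hx).ne')
  filter_upwards [Ioo_mem_nhdsLT ((div_lt_one (hg0 x₀ hx₀)).2 (hfg x₀ hx₀))] with c hc x hx
  rw [← div_le_iff₀ (hg0 x hx)]
  exact (hmax hx).trans hc.1.le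

section

variable {K : ℕ} {f : (Fin K → ℝ) → ℝ} {O : Set (Fin K → ℝ)}

theorem HasFDerivAt.comp_update {φ : (Fin K → ℝ) →L[ℝ] ℝ} {w : Fin K → ℝ} {k : Fin K}
    {t : ℝ} (hf : HasFDerivAt f φ (update w k t)) :
    HasDerivAt (fun s => f (update w k s)) (φ (Pi.single k 1)) t :=
  hf.comp_hasDerivAt t (hasDerivAt_update w k t)

theorem pd_eq_of_hasFDerivAt {φ : (Fin K → ℝ) →L[ℝ] ℝ} {w : Fin K → ℝ}
    (hf : HasFDerivAt f φ w) (k : Fin K) : pd k f w = φ (Pi.single k 1) :=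
  (HasFDerivAt.comp_update (by rwa [update_eq_self])).deriv

theorem pd_congr {g : (Fin K → ℝ) → ℝ} {w : Fin K → ℝ} (h : f =ᶠ[𝓝 w] g) (k : Fin K) :
    pd k f w = pd k g w := by
  have hc : Tendsto (update w k) (𝓝 (w k)) (𝓝 w) := by
    simpa using (by fun_prop : Continuous (update w k)).tendsto (w k)
  exact (h.comp_tendsto hc).deriv_eq

theorem deriv_comp_update (u : Fin K → ℝ) (k : Fin K) :
    deriv (fun t => f (update u k t)) = fun t => pd k f (update u k t) := by
  funext t
  simp only [pd, update_idem, update_self]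

theorem strictConvexOn_comp_update {u : Fin K → ℝ} {k : Fin K} {D : Set ℝ} (hD : Convex ℝ D)
    (hf : ContinuousOn (fun t => f (update u k t)) D)
    (hpos : ∀ t ∈ interior D, 0 < pd k (pd k f) (update u k t)) :
    StrictConvexOn ℝ D (fun t => f (update u k t)) := by
  refine strictConvexOn_of_deriv2_pos hD hf fun t ht => ?_
  simpa only [Function.iterate_succ, Function.iterate_zero, Function.comp_apply, id,
    deriv_comp_update] using hpos t ht

theorem ContDiffOn.hasFDerivAt_fderiv (hf : ContDiffOn ℝ 2 f O) (hO : IsOpen O)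
    {w : Fin K → ℝ} (hw : w ∈ O) : HasFDerivAt (fderiv ℝ f) (fderiv ℝ (fderiv ℝ f) w) w :=
  ((hf.fderiv_of_isOpen hO (m := 1) (by norm_num)).differentiableOn one_ne_zero
    |>.differentiableAt (hO.mem_nhds hw)).hasFDerivAt

theorem ContDiffOn.pd_pd_eq (hf : ContDiffOn ℝ 2 f O) (hO : IsOpen O) {w : Fin K → ℝ}
    (hw : w ∈ O) (k l : Fin K) :
    pd l (pd k f) w = fderiv ℝ (fderiv ℝ f) w (Pi.single l 1) (Pi.single k 1) := by
  have hpd : pd k f =ᶠ[𝓝 w] fun z => fderiv ℝ f z (Pi.single k 1) :=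
    eventually_of_mem (hO.mem_nhds hw) fun z hz => pd_eq_of_hasFDerivAt
      ((hf.contDiffAt (hO.mem_nhds hz)).differentiableAt (by norm_num)).hasFDerivAt k
  rw [pd_congr hpd]
  exact pd_eq_of_hasFDerivAt ((hf.hasFDerivAt_fderiv hO hw).apply_const _) l

theorem ContDiffOn.continuousOn_pd_pd (hf : ContDiffOn ℝ 2 f O) (hO : IsOpen O) (k l : Fin K) :
    ContinuousOn (pd l (pd k f)) O :=
  (((hf.fderiv_of_isOpen hO (m := 1) (by norm_num)).continuousOn_fderiv_of_isOpen hO le_rfl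
    |>.clm_apply continuousOn_const).clm_apply continuousOn_const).congr
    fun _ hw => hf.pd_pd_eq hO hw k l

theorem ContDiffOn.exists_fderiv_single_sub_eq (hf : ContDiffOn ℝ 2 f O) (hO : IsOpen O)
    {B : Set (Fin K → ℝ)} (hB : Convex ℝ B) (hBO : B ⊆ O) {x y : Fin K → ℝ} (hx : x ∈ B)
    (hy : y ∈ B) (k : Fin K) :
    ∃ z ∈ B, fderiv ℝ f y (Pi.single k 1) - fderiv ℝ f x (Pi.single k 1)
      = ∑ l, (y l - x l) * pd l (pd k f) z := by
  obtain ⟨z, hz, hmvt⟩ := domain_mvt (f := fun w => fderiv ℝ f w (Pi.single k 1))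
    (fun w hw => ((hf.hasFDerivAt_fderiv hO (hBO hw)).apply_const _).hasFDerivWithinAt)
    hB hx hy
  have hzB : z ∈ B := hB.segment_subset hx hy hz
  refine ⟨z, hzB, ?_⟩
  rw [hmvt, ContinuousLinearMap.apply_eq_sum_mul_single]
  simp [hf.pd_pd_eq hO (hBO hzB)]

theorem abs_sub_le_of_isMinOn_update (hO : IsOpen O) (hf : ContDiffOn ℝ 2 f O)
    {I : Fin K → Set ℝ} (hI : ∀ l, Convex ℝ (I l)) (hIO : univ.pi I ⊆ O) {k : Fin K} {c : ℝ}
    (hpos : ∀ z ∈ univ.pi I, 0 < pd k (pd k f) z)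
    (hdom : ∀ z ∈ univ.pi I,
      ∑ l ∈ Finset.univ.erase k, |pd l (pd k f) z| ≤ c * pd k (pd k f) z)
    {u v : Fin K → ℝ} (hu : u ∈ univ.pi I) (hv : v ∈ univ.pi I) {a b : ℝ}
    (ha : IsMinOn (fun t => f (update u k t)) (I k) a)
    (hb : IsMinOn (fun t => f (update v k t)) (I k) b) (haI : a ∈ I k) (hbI : b ∈ I k) :
    |a - b| ≤ c * ⨆ l, |u l - v l| := by
  set N := ⨆ l, |u l - v l|
  have hN : ∀ l, |v l - u l| ≤ N := fun l => by
    rw [abs_sub_comm]; exact le_ciSup (Finite.bddAbove_range fun l => |u l - v l|) l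
  have hx : update u k a ∈ univ.pi I := (update_mem_pi_iff_of_mem hu).2 fun _ => haI
  have hy : update v k b ∈ univ.pi I := (update_mem_pi_iff_of_mem hv).2 fun _ => hbI
  have hdiff : ∀ z ∈ univ.pi I, HasFDerivAt f (fderiv ℝ f z) z := fun z hz =>
    ((hf.contDiffAt (hO.mem_nhds (hIO hz))).differentiableAt (by norm_num)).hasFDerivAt
  have hfoc_a := ha.deriv_mul_sub_nonneg (hI k) (hdiff _ hx).comp_update haI hbI
  have hfoc_b := hb.deriv_mul_sub_nonneg (hI k) (hdiff _ hy).comp_update hbI haI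
  obtain ⟨z, hz, hmvt⟩ :=
    hf.exists_fderiv_single_sub_eq hO (convex_pi fun l _ => hI l) hIO hx hy k
  rw [← Finset.add_sum_erase _ _ (Finset.mem_univ k)] at hmvt
  set S := ∑ l ∈ Finset.univ.erase k, (update v k b l - update u k a l) * pd l (pd k f) z
  have hS : |S| ≤ pd k (pd k f) z * (c * N) :=
    calc |S| ≤ N * ∑ l ∈ Finset.univ.erase k, |pd l (pd k f) z| :=
          abs_sum_mul_le_mul_sum_abs _ fun l hl => by
            simpa [update_of_ne (Finset.ne_of_mem_erase hl)] using hN l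
      _ ≤ N * (c * pd k (pd k f) z) :=
          mul_le_mul_of_nonneg_left (hdom z hz) ((abs_nonneg _).trans (hN k))
      _ = pd k (pd k f) z * (c * N) := by ring
  rw [abs_sub_comm]
  refine abs_le_of_add_mul_mul_nonpos (hpos z hz) hS ?_
  simp only [update_self] at hmvt
  rw [add_comm, ← hmvt]
  linarith

end

theorem best_response_contraction_general
    (K : ℕ)
    (Umin Umax : Fin K → ℝ)
    (J : Fin K → (Fin K → ℝ) → ℝ)
    (O : Set (Fin K → ℝ)) (hO : IsOpen O)
    (hUO : (Set.univ.pi fun k => Set.Icc (Umin k) (Umax k)) ⊆ O)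
    (hsmooth : ∀ k, ContDiffOn ℝ 2 (J k) O)
    (hdom : ∀ k, ∀ u ∈ Set.univ.pi fun k => Set.Icc (Umin k) (Umax k),
      ∑ l ∈ Finset.univ.erase k, |pd l (pd k (J k)) u| < pd k (pd k (J k)) u)
    (BR : (Fin K → ℝ) → Fin K → ℝ)
    (hBR : ∀ u ∈ Set.univ.pi fun k => Set.Icc (Umin k) (Umax k), ∀ k,
      BR u k ∈ Set.Icc (Umin k) (Umax k) ∧
      ∀ v ∈ Set.Icc (Umin k) (Umax k),
        J k (Function.update u k (BR u k)) ≤ J k (Function.update u k v)) :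
    (∀ u ∈ Set.univ.pi fun k => Set.Icc (Umin k) (Umax k), ∀ k,
      ∀ m ∈ Set.Icc (Umin k) (Umax k),
        (∀ v ∈ Set.Icc (Umin k) (Umax k),
          J k (Function.update u k m) ≤ J k (Function.update u k v)) →
        m = BR u k) ∧
    ∃ c : ℝ, 0 ≤ c ∧ c < 1 ∧
      ∀ u ∈ Set.univ.pi fun k => Set.Icc (Umin k) (Umax k),
      ∀ v ∈ Set.univ.pi fun k => Set.Icc (Umin k) (Umax k),
      ∀ k, |BR u k - BR v k| ≤ c * ⨆ l, |u l - v l| := by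
  set B := univ.pi fun k => Icc (Umin k) (Umax k)
  have hdiag : ∀ k, ∀ z ∈ B, 0 < pd k (pd k (J k)) z := fun k z hz =>
    (Finset.sum_nonneg fun _ _ => abs_nonneg _).trans_lt (hdom k z hz)
  have hmin : ∀ u ∈ B, ∀ k,
      IsMinOn (fun t => J k (update u k t)) (Icc (Umin k) (Umax k)) (BR u k) := fun u hu k =>
    isMinOn_iff.2 (hBR u hu k).2
  refine ⟨fun u hu k m hm hm_min => ?_, ?_⟩
  · have hupd : ∀ t ∈ Icc (Umin k) (Umax k), update u k t ∈ B := fun t ht =>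
      (update_mem_pi_iff_of_mem hu).2 fun _ => ht
    have hcont : ContinuousOn (fun t => J k (update u k t)) (Icc (Umin k) (Umax k)) :=
      (hsmooth k).continuousOn.comp (by fun_prop : Continuous (update u k)).continuousOn
        fun t ht => hUO (hupd t ht)
    have hconv := strictConvexOn_comp_update (convex_Icc _ _) hcont fun t ht =>
      hdiag k _ (hupd t (interior_subset ht))
    exact hconv.eq_of_isMinOn (isMinOn_iff.2 hm_min) (hmin u hu k) hm (hBR u hu k).1
  · have hB : IsCompact B := isCompact_univ_pi fun k => isCompact_Icc
    have hcont : ∀ k l, ContinuousOn (pd l (pd k (J k))) B := fun k l =>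
      ((hsmooth k).continuousOn_pd_pd hO k l).mono hUO
    obtain ⟨c, hc, hc01⟩ := ((eventually_all.2 fun k => hB.eventually_le_mul_of_lt
      (continuousOn_finsetSum _ fun l _ => (hcont k l).abs) (hcont k k) (hdiag k)
      (hdom k)).and (Ioo_mem_nhdsLT one_pos)).exists
    exact ⟨c, hc01.1.le, hc01.2, fun u hu v hv k =>
      abs_sub_le_of_isMinOn_update hO (hsmooth k) (fun _ => convex_Icc _ _) hUO (hdiag k)
        (hc k) hu hv (hmin u hu k) (hmin v hv k) (hBR u hu k).1 (hBR v hv k).1⟩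

/-- Under strict diagonal dominance of the second derivatives of the costs, the
simultaneous best-response map `BR` (whose `k`-th component is the unique
minimizer of the own cost over the own action interval) is well defined — i.e.
any minimizer coincides with `BR u k` — and is a contraction for the sup norm
on the product of the action intervals. -/
theorem best_response_contraction
    (K : ℕ) (hK : 1 < K)
    (Umin Umax : Fin K → ℝ) (hU : ∀ k, Umin k ≤ Umax k)
    (J : Fin K → (Fin K → ℝ) → ℝ)
    (O : Set (Fin K → ℝ)) (hO : IsOpen O)
    (hUO : (Set.univ.pi fun k => Set.Icc (Umin k) (Umax k)) ⊆ O)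
    (hsmooth : ∀ k, ContDiffOn ℝ 2 (J k) O)
    (hdom : ∀ k, ∀ u ∈ Set.univ.pi fun k => Set.Icc (Umin k) (Umax k),
      ∑ l ∈ Finset.univ.erase k, |pd l (pd k (J k)) u| < pd k (pd k (J k)) u)
    (BR : (Fin K → ℝ) → Fin K → ℝ)
    (hBR : ∀ u ∈ Set.univ.pi fun k => Set.Icc (Umin k) (Umax k), ∀ k,
      BR u k ∈ Set.Icc (Umin k) (Umax k) ∧
      ∀ v ∈ Set.Icc (Umin k) (Umax k),
        J k (Function.update u k (BR u k)) ≤ J k (Function.update u k v)) :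
    (∀ u ∈ Set.univ.pi fun k => Set.Icc (Umin k) (Umax k), ∀ k,
      ∀ m ∈ Set.Icc (Umin k) (Umax k),
        (∀ v ∈ Set.Icc (Umin k) (Umax k),
          J k (Function.update u k m) ≤ J k (Function.update u k v)) →
        m = BR u k) ∧
    ∃ c : ℝ, 0 ≤ c ∧ c < 1 ∧
      ∀ u ∈ Set.univ.pi fun k => Set.Icc (Umin k) (Umax k),
      ∀ v ∈ Set.univ.pi fun k => Set.Icc (Umin k) (Umax k),
      ∀ k, |BR u k - BR v k| ≤ c * ⨆ l, |u l - v l| :=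
  best_response_contraction_general K Umin Umax J O hO hUO hsmooth hdom BR hBR
end

section
/- Fix u ∈ 𝒰 and suppose s_k(t,u) > 0 for all k and all t ∈ [0,T]. Then for every k ∈ {1,…,K}, the function t ↦ (1−u_k)·Σ_{ℓ=1}^K ρ_{kℓ}·(s_ℓ(t,u) + i_ℓ(t,u)) − ln(s_k(t,u)) is constant on [0,T]. -/
/-! Along the flow `(s_ℓ + i_ℓ)' = -γ_ℓ i_ℓ`; hence with the weights `ρ_{kℓ} = β_{kℓ}/γ_ℓ` the
quantity `(1 - u_k) Σ_ℓ ρ_{kℓ} (s_ℓ + i_ℓ)` has derivative `-(1 - u_k) Σ_ℓ β_{kℓ} i_ℓ`, minus the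
force of infection on region `k`. Since `s_k' = -s_k · (force of infection)`, this is also the
derivative of `log s_k` while `s_k > 0`, so the difference has derivative zero. -/

open Finset Set

theorem eq_of_hasDerivAt_zero_on_Icc {f : ℝ → ℝ} {a b : ℝ}
    (hf : ∀ t ∈ Icc a b, HasDerivAt f 0 t) : ∀ t ∈ Icc a b, f t = f a :=
  constant_of_has_deriv_right_zero
    (fun t ht => (hf t ht).continuousAt.continuousWithinAt)
    (fun t ht => (hf t (Ico_subset_Icc_self ht)).hasDerivWithinAt)

section SIR

variable {s i : ℝ → ℝ} {t γ c : ℝ}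

theorem hasDerivAt_susceptible_add_infected
    (hs : HasDerivAt s (-s t * c) t) (hi : HasDerivAt i (s t * c - γ * i t) t) :
    HasDerivAt (fun τ => s τ + i τ) (-(γ * i t)) t :=
  (hs.fun_add hi).congr_deriv (by ring)

theorem hasDerivAt_log_susceptible (hs : HasDerivAt s (-s t * c) t) (hst : s t ≠ 0) :
    HasDerivAt (fun τ => Real.log (s τ)) (-c) t :=
  (hs.log hst).congr_deriv (by field_simp)

end SIR

theorem hasDerivAt_sir_conserved_quantity {ι : Type*} [Fintype ι]
    {β : ι → ι → ℝ} {γ u : ι → ℝ} {s i : ℝ → ι → ℝ} {t : ℝ} (hγ : ∀ l, γ l ≠ 0)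
    (hs : ∀ l, HasDerivAt (fun τ => s τ l) (-s t l * ((1 - u l) * ∑ m, β l m * i t m)) t)
    (hi : ∀ l, HasDerivAt (fun τ => i τ l)
      (s t l * ((1 - u l) * ∑ m, β l m * i t m) - γ l * i t l) t)
    {k : ι} (hsk : s t k ≠ 0) :
    HasDerivAt
      (fun τ => (1 - u k) * (∑ l, β k l / γ l * (s τ l + i τ l)) - Real.log (s τ k)) 0 t := by
  have hweighted : HasDerivAt (fun τ => ∑ l, β k l / γ l * (s τ l + i τ l))
      (-∑ l, β k l * i t l) t := by
    rw [← sum_neg_distrib]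
    refine HasDerivAt.fun_sum fun l _ => ?_
    exact ((hasDerivAt_susceptible_add_infected (hs l) (hi l)).const_mul (β k l / γ l)).congr_deriv
      (by field_simp [hγ l])
  exact ((hweighted.const_mul (1 - u k)).fun_sub
    (hasDerivAt_log_susceptible (hs k) hsk)).congr_deriv (by ring)

theorem sir_conservation_law_general
    (K : ℕ)
    (β : Fin K → Fin K → ℝ)
    (γ : Fin K → ℝ) (hγ : ∀ k, 0 < γ k)
    (T : ℝ)
    (u : Fin K → ℝ)
    (s i r : ℝ → Fin K → ℝ)
    (hode : ∀ k, ∀ t ∈ Set.Icc 0 T,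
      HasDerivAt (fun τ => s τ k)
        (-(s t k) * ((1 - u k) * ∑ l, β k l * i t l)) t ∧
      HasDerivAt (fun τ => i τ k)
        (s t k * ((1 - u k) * ∑ l, β k l * i t l) - γ k * i t k) t ∧
      HasDerivAt (fun τ => r τ k) (γ k * i t k) t)
    (hspos : ∀ k, ∀ t ∈ Set.Icc 0 T, 0 < s t k) :
    ∀ k, ∀ t ∈ Set.Icc 0 T,
      (1 - u k) * (∑ l, β k l / γ l * (s t l + i t l)) - Real.log (s t k) =
      (1 - u k) * (∑ l, β k l / γ l * (s 0 l + i 0 l)) - Real.log (s 0 k) := by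
  intro k
  refine eq_of_hasDerivAt_zero_on_Icc fun t ht => ?_
  exact hasDerivAt_sir_conserved_quantity (fun l => (hγ l).ne')
    (fun l => (hode l t ht).1) (fun l => (hode l t ht).2.1) (hspos k t ht).ne'

/-- Conservation law for the networked SIR model: for a fixed control profile
`u` with `u k ∈ [Umin k, Umax k] ⊂ [0,1)`, if all susceptible fractions remain
positive on `[0,T]`, then for every region `k` the quantity
`(1-u_k) Σ_ℓ ρ_{kℓ} (s_ℓ(t) + i_ℓ(t)) − ln s_k(t)` is constant on `[0,T]`. -/
theorem sir_conservation_law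
    (K : ℕ) (hK : 1 < K)
    (β : Fin K → Fin K → ℝ) (hβ : ∀ k l, 0 ≤ β k l)
    (γ : Fin K → ℝ) (hγ : ∀ k, 0 < γ k)
    (Umin Umax : Fin K → ℝ)
    (hUbounds : ∀ k, 0 ≤ Umin k ∧ Umin k ≤ Umax k ∧ Umax k < 1)
    (T : ℝ) (hT : 0 < T)
    (u : Fin K → ℝ) (hu : ∀ k, u k ∈ Set.Icc (Umin k) (Umax k))
    (s i r : ℝ → Fin K → ℝ)
    (s0 i0 : Fin K → ℝ) (hs0 : ∀ k, 0 < s0 k) (hi0 : ∀ k, 0 ≤ i0 k)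
    (hinit : ∀ k, s 0 k = s0 k ∧ i 0 k = i0 k)
    (hode : ∀ k, ∀ t ∈ Set.Icc 0 T,
      HasDerivAt (fun τ => s τ k)
        (-(s t k) * ((1 - u k) * ∑ l, β k l * i t l)) t ∧
      HasDerivAt (fun τ => i τ k)
        (s t k * ((1 - u k) * ∑ l, β k l * i t l) - γ k * i t k) t ∧
      HasDerivAt (fun τ => r τ k) (γ k * i t k) t)
    (hspos : ∀ k, ∀ t ∈ Set.Icc 0 T, 0 < s t k) :
    ∀ k, ∀ t ∈ Set.Icc 0 T,
      (1 - u k) * (∑ l, β k l / γ l * (s t l + i t l)) - Real.log (s t k) =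
      (1 - u k) * (∑ l, β k l / γ l * (s 0 l + i 0 l)) - Real.log (s 0 k) :=
  sir_conservation_law_general K β γ hγ T u s i r hode hspos
end

section
/- Fix u ∈ 𝒰 and suppose s_k(t,u) > 0 for all k and all t ∈ [0,T]. Then for every k ∈ {1,…,K}, the final-size relation F_k(u, s(T,u), i(T,u)) = 0 holds, i.e. (1−u_k)·Σ_{ℓ=1}^K ρ_{kℓ}·( s_ℓ(T,u) + i_ℓ(T,u) − s_ℓ⁰ − i_ℓ⁰ ) + ln( s_k⁰ / s_k(T,u) ) = 0. -/
/-!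
Along a trajectory on which `s_k` stays positive, the quantity
`(1 - u_k) Σ_ℓ ρ_{kℓ} (s_ℓ + i_ℓ) - ln s_k` is conserved: since `(s_ℓ + i_ℓ)' = -γ_ℓ i_ℓ`,
the first term has derivative `-(1 - u_k) Σ_ℓ β_{kℓ} i_ℓ`, which is exactly `(ln s_k)'`.
Comparing its values at `0` and `T` gives the final-size relation.
-/

open Finset

theorem eq_of_hasDerivAt_zero_of_mem_Icc {E : Type*} [NormedAddCommGroup E] [NormedSpace ℝ E]
    {f : ℝ → E} {a b : ℝ} (hab : a ≤ b) (hf : ∀ t ∈ Set.Icc a b, HasDerivAt f 0 t) :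
    f b = f a :=
  constant_of_has_deriv_right_zero (fun t ht => (hf t ht).continuousAt.continuousWithinAt)
    (fun t ht => (hf t (Set.Ico_subset_Icc_self ht)).hasDerivWithinAt) b (Set.right_mem_Icc.2 hab)

section

variable {ι : Type*} [Fintype ι] (β : ι → ι → ℝ) (γ u : ι → ℝ) (s i : ℝ → ι → ℝ)

noncomputable def sirFinalSizeInvariant (k : ι) (τ : ℝ) : ℝ :=
  (1 - u k) * ∑ l, β k l / γ l * (s τ l + i τ l) - Real.log (s τ k)

variable {β γ u s i}

theorem hasDerivAt_sirFinalSizeInvariant (hγ : ∀ l, γ l ≠ 0) {k : ι} {t : ℝ} (hsk : s t k ≠ 0)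
    (hs : ∀ l, HasDerivAt (fun τ => s τ l) (-(s t l) * ((1 - u l) * ∑ m, β l m * i t m)) t)
    (hi : ∀ l, HasDerivAt (fun τ => i τ l)
      (s t l * ((1 - u l) * ∑ m, β l m * i t m) - γ l * i t l) t) :
    HasDerivAt (sirFinalSizeInvariant β γ u s i k) 0 t := by
  have hpopulation : HasDerivAt (fun τ => ∑ l, β k l / γ l * (s τ l + i τ l))
      (-∑ l, β k l * i t l) t := by
    rw [← sum_neg_distrib]
    refine HasDerivAt.fun_sum fun l _ => ?_
    refine (((hs l).fun_add (hi l)).const_mul (β k l / γ l)).congr_deriv ?_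
    field_simp [hγ l]
    ring
  refine ((hpopulation.const_mul (1 - u k)).fun_sub ((hs k).log hsk)).congr_deriv ?_
  field_simp
  ring

end

theorem sir_final_size_relation_general
    (K : ℕ)
    (β : Fin K → Fin K → ℝ)
    (γ : Fin K → ℝ) (hγ : ∀ k, 0 < γ k)
    (T : ℝ) (hT : 0 < T)
    (u : Fin K → ℝ)
    (s i r : ℝ → Fin K → ℝ)
    (s0 i0 : Fin K → ℝ)
    (hinit : ∀ k, s 0 k = s0 k ∧ i 0 k = i0 k)
    (hode : ∀ k, ∀ t ∈ Set.Icc 0 T,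
      HasDerivAt (fun τ => s τ k)
        (-(s t k) * ((1 - u k) * ∑ l, β k l * i t l)) t ∧
      HasDerivAt (fun τ => i τ k)
        (s t k * ((1 - u k) * ∑ l, β k l * i t l) - γ k * i t k) t ∧
      HasDerivAt (fun τ => r τ k) (γ k * i t k) t)
    (hspos : ∀ k, ∀ t ∈ Set.Icc 0 T, 0 < s t k) :
    ∀ k, (1 - u k) *
        (∑ l, β k l / γ l * (s T l + i T l - s0 l - i0 l)) +
        Real.log (s0 k / s T k) = 0 := by
  intro k
  have hconserved := eq_of_hasDerivAt_zero_of_mem_Icc hT.le fun t ht =>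
    hasDerivAt_sirFinalSizeInvariant (fun l => (hγ l).ne') (hspos k t ht).ne'
      (fun l => (hode l t ht).1) (fun l => (hode l t ht).2.1)
  have hs0k : 0 < s0 k := (hinit k).1 ▸ hspos k 0 (Set.left_mem_Icc.2 hT.le)
  have hsTk : 0 < s T k := hspos k T (Set.right_mem_Icc.2 hT.le)
  simp only [sirFinalSizeInvariant, (hinit _).1, (hinit _).2] at hconserved
  rw [Real.log_div hs0k.ne' hsTk.ne']
  simp only [mul_sub, mul_add, sum_sub_distrib, sum_add_distrib] at hconserved ⊢
  linarith

/-- Final-size relation for the networked SIR model: for a fixed control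
profile `u` with `u k ∈ [Umin k, Umax k] ⊂ [0,1)`, if all susceptible fractions
remain positive on `[0,T]`, then for every region `k` we have
`F_k(u, s(T,u), i(T,u)) = 0`, i.e.
`(1-u_k) Σ_ℓ ρ_{kℓ} (s_ℓ(T) + i_ℓ(T) − s_ℓ⁰ − i_ℓ⁰) + ln(s_k⁰ / s_k(T)) = 0`. -/
theorem sir_final_size_relation
    (K : ℕ) (hK : 1 < K)
    (β : Fin K → Fin K → ℝ) (hβ : ∀ k l, 0 ≤ β k l)
    (γ : Fin K → ℝ) (hγ : ∀ k, 0 < γ k)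
    (Umin Umax : Fin K → ℝ)
    (hUbounds : ∀ k, 0 ≤ Umin k ∧ Umin k ≤ Umax k ∧ Umax k < 1)
    (T : ℝ) (hT : 0 < T)
    (u : Fin K → ℝ) (hu : ∀ k, u k ∈ Set.Icc (Umin k) (Umax k))
    (s i r : ℝ → Fin K → ℝ)
    (s0 i0 : Fin K → ℝ) (hs0 : ∀ k, 0 < s0 k) (hi0 : ∀ k, 0 ≤ i0 k)
    (hinit : ∀ k, s 0 k = s0 k ∧ i 0 k = i0 k)
    (hode : ∀ k, ∀ t ∈ Set.Icc 0 T,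
      HasDerivAt (fun τ => s τ k)
        (-(s t k) * ((1 - u k) * ∑ l, β k l * i t l)) t ∧
      HasDerivAt (fun τ => i τ k)
        (s t k * ((1 - u k) * ∑ l, β k l * i t l) - γ k * i t k) t ∧
      HasDerivAt (fun τ => r τ k) (γ k * i t k) t)
    (hspos : ∀ k, ∀ t ∈ Set.Icc 0 T, 0 < s t k) :
    ∀ k, (1 - u k) *
        (∑ l, β k l / γ l * (s T l + i T l - s0 l - i0 l)) +
        Real.log (s0 k / s T k) = 0 :=
  sir_final_size_relation_general K β γ hγ T hT u s i r s0 i0 hinit hode hspos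
end
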